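/- Assume relations (R1) and (R2) hold on ℝ². Then on all of ℝ², Ξ = −∂ₓg₁ + (1/√2)∂ₓ³g₁ − (∂ₓg₁)² − Π₁. -/

import Mathlib

noncomputable section
open Set

namespace Stmt1

/-- partial derivative in the first variable -/
def pdx (f : ℝ → ℝ → ℝ) : ℝ → ℝ → ℝ := fun x y => deriv (fun t => f t y) x

/-- partial derivative in the second variable -/
def pdy (f : ℝ → ℝ → ℝ) : ℝ → ℝ → ℝ := fun x y => deriv (fun t => f x t) y

def Smooth2 (f : ℝ → ℝ → ℝ) : Prop := ContDiff ℝ (⊤ : ℕ∞) (Function.uncurry f)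

/-- Π₁ = −ε²∂_y²f₁ − ε⁴∂_y²f₂ − ε²∂ₓ²f₂ + 6ε²f₁f₂ + ε²(f₁+ε²f₂)³ + 3ε⁴f₂² + ε²f₂g₁² -/
def Pi1 (ε : ℝ) (f1 f2 g1 : ℝ → ℝ → ℝ) : ℝ → ℝ → ℝ := fun x y =>
  -ε^2 * pdy (pdy f1) x y - ε^4 * pdy (pdy f2) x y - ε^2 * pdx (pdx f2) x y
    + 6*ε^2 * f1 x y * f2 x y + ε^2 * (f1 x y + ε^2 * f2 x y)^3
    + 3*ε^4 * (f2 x y)^2 + ε^2 * f2 x y * (g1 x y)^2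

/-- Ξ = 2f₂ + f₁² + √2(∂ₓ(f₁g₁) + g₁²∂ₓg₁) -/
def Xi (f1 f2 g1 : ℝ → ℝ → ℝ) : ℝ → ℝ → ℝ := fun x y =>
  2 * f2 x y + (f1 x y)^2
    + Real.sqrt 2 * (pdx (fun a b => f1 a b * g1 a b) x y + (g1 x y)^2 * pdx g1 x y)

theorem xi_formula (ε : ℝ) (hε : ε ∈ Ioo (0:ℝ) ((2:ℝ) ^ ((1:ℝ)/4)))
    (f1 f2 g1 : ℝ → ℝ → ℝ)
    (hf1 : Smooth2 f1) (hf2 : Smooth2 f2) (hg1 : Smooth2 g1)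
    (hR1 : ∀ x y : ℝ, f1 x y = Real.sqrt 2 / 2 * pdx g1 x y - (g1 x y)^2 / 2)
    (hR2 : ∀ x y : ℝ, -pdx g1 x y =
      -pdx (pdx f1) x y + f1 x y * (2 * f1 x y + (g1 x y)^2)
        + 2 * f2 x y + (f1 x y)^2 + Pi1 ε f1 f2 g1 x y) :
    ∀ x y : ℝ, Xi f1 f2 g1 x y =
      -pdx g1 x y + 1 / Real.sqrt 2 * pdx (pdx (pdx g1)) x y
        - (pdx g1 x y)^2 - Pi1 ε f1 f2 g1 x y := by
  intro x y
  set s : ℝ := Real.sqrt 2 with hsdef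
  have hs2 : s ^ 2 = 2 := Real.sq_sqrt (by norm_num)
  have hspos : (0:ℝ) < s := Real.sqrt_pos.mpr (by norm_num)
  -- the x-slice of g1
  set G : ℝ → ℝ := fun t => g1 t y with hGdef
  have hG : ContDiff ℝ (⊤ : ℕ∞) G :=
    (hg1.comp (contDiff_id.prodMk contDiff_const)).of_le (by simp)
  have hG1 : ContDiff ℝ (⊤ : ℕ∞) (deriv G) := (contDiff_infty_iff_deriv.mp hG).2
  have hG2 : ContDiff ℝ (⊤ : ℕ∞) (deriv (deriv G)) := (contDiff_infty_iff_deriv.mp hG1).2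
  have hGd : ∀ t, HasDerivAt G (deriv G t) t :=
    fun t => (hG.differentiable (by simp) t).hasDerivAt
  have hG1d : ∀ t, HasDerivAt (deriv G) (deriv (deriv G) t) t :=
    fun t => (hG1.differentiable (by simp) t).hasDerivAt
  have hG2d : ∀ t, HasDerivAt (deriv (deriv G)) (deriv (deriv (deriv G)) t) t :=
    fun t => (hG2.differentiable (by simp) t).hasDerivAt
  -- pdx g1 as deriv G
  have hpdxg : ∀ t, pdx g1 t y = deriv G t := fun t => rfl
  -- f1 slice expressed via G
  have hF1fun : (fun t => f1 t y) = fun t => s / 2 * deriv G t - (G t) ^ 2 / 2 := by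
    funext t; exact hR1 t y
  have hE : ∀ t, HasDerivAt (fun t => s / 2 * deriv G t - (G t) ^ 2 / 2)
      (s / 2 * deriv (deriv G) t - G t * deriv G t) t := by
    intro t
    have h := ((hG1d t).const_mul (s / 2)).fun_sub (((hGd t).fun_pow 2).div_const 2)
    exact h.congr_deriv (by push_cast; ring)
  have hdF1 : deriv (fun t => f1 t y) =
      fun t => s / 2 * deriv (deriv G) t - G t * deriv G t := by
    funext t; rw [hF1fun]; exact (hE t).deriv
  -- pdx (pdx f1) x y
  have hpdx2f1 : pdx (pdx f1) x y =
      s / 2 * deriv (deriv (deriv G)) x - (deriv G x * deriv G x + G x * deriv (deriv G) x) := by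
    have h0 : (fun t => pdx f1 t y) = deriv (fun t => f1 t y) := rfl
    show deriv (fun t => pdx f1 t y) x = _
    rw [h0, hdF1]
    exact (((hG2d x).const_mul (s / 2)).sub ((hGd x).mul (hG1d x))).deriv
  -- pdx (f1 * g1) x y
  have hpdxprod : pdx (fun a b => f1 a b * g1 a b) x y =
      (s / 2 * deriv (deriv G) x - G x * deriv G x) * G x
        + (s / 2 * deriv G x - (G x) ^ 2 / 2) * deriv G x := by
    have h0 : (fun t => f1 t y * g1 t y) =
        fun t => (s / 2 * deriv G t - (G t) ^ 2 / 2) * G t := by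
      funext t; rw [hR1 t y]; rfl
    show deriv (fun t => f1 t y * g1 t y) x = _
    rw [h0]
    exact ((hE x).mul (hGd x)).deriv
  -- pdx^3 g1
  have hpdx3g : pdx (pdx (pdx g1)) x y = deriv (deriv (deriv G)) x := by
    have h0 : (fun t => pdx (pdx g1) t y) = deriv (deriv G) := by
      funext t
      show deriv (fun u => pdx g1 u y) t = _
      have : (fun u => pdx g1 u y) = deriv G := rfl
      rw [this]
    show deriv (fun t => pdx (pdx g1) t y) x = _
    rw [h0]
  have h1s : 1 / s = s / 2 := by
    rw [div_eq_div_iff hspos.ne' (by norm_num : (2:ℝ) ≠ 0)]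
    nlinarith [hs2]
  have hR2' := hR2 x y
  rw [hpdx2f1, hpdxg x, hR1 x y, hpdxg x] at hR2'
  show 2 * f2 x y + (f1 x y) ^ 2
      + s * (pdx (fun a b => f1 a b * g1 a b) x y + (g1 x y) ^ 2 * pdx g1 x y)
    = -pdx g1 x y + 1 / s * pdx (pdx (pdx g1)) x y - (pdx g1 x y) ^ 2
      - Pi1 ε f1 f2 g1 x y
  rw [hpdxprod, hpdx3g, hpdxg x, hR1 x y, hpdxg x, h1s]
  show 2 * f2 x y + (s / 2 * deriv G x - (g1 x y) ^ 2 / 2) ^ 2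
      + s * ((s / 2 * deriv (deriv G) x - G x * deriv G x) * G x
        + (s / 2 * deriv G x - (G x) ^ 2 / 2) * deriv G x
        + (g1 x y) ^ 2 * deriv G x)
    = -deriv G x + s / 2 * deriv (deriv (deriv G)) x - (deriv G x) ^ 2
      - Pi1 ε f1 f2 g1 x y
  have hgG : g1 x y = G x := rfl
  rw [hgG]
  linear_combination (-1 : ℝ) * hR2' + (G x * deriv (deriv G) x / 2) * hs2
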